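/- arXiv:2003.09266 — 8 statements merged into one kernel-verified Lean document; each statement's English description precedes it below -/
import Mathlib

section
/- Let P_1, ..., P_d be finite point sets in R^d and let y_1 ∈ conv(P_1), ..., y_d ∈ conv(P_d) be points, one from each convex hull. If the affine hull of {y_1, ..., y_d} has dimension at most d−2, then there exists a partition of [d] into two nonempty disjoint index sets I and J such that conv(⋃_{i∈I} P_i) ∩ conv(⋃_{j∈J} P_j) ≠ ∅. -/
/-!
`d` points whose affine span has dimension at most `d - 2` are affinely dependent, so Radon's
theorem splits the `y i` into two parts with intersecting convex hulls; neither part can be empty.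
As `y i ∈ conv (P i)`, the hull of a part lies in the hull of the union of the corresponding `P i`.
-/

open Set Module

theorem not_affineIndependent_of_finrank_direction_add_one_lt {k V P ι : Type*} [DivisionRing k]
    [AddCommGroup V] [Module k V] [AddTorsor V P] [Fintype ι] {p : ι → P}
    (h : finrank k (affineSpan k (range p)).direction + 1 < Fintype.card ι) :
    ¬ AffineIndependent k p := by
  intro hp
  rw [direction_affineSpan, hp.finrank_vectorSpan (n := Fintype.card ι - 1) (by omega)] at h
  omega

theorem exists_nonempty_radon_partition {𝕜 E ι : Type*} [Field 𝕜] [LinearOrder 𝕜]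
    [IsStrictOrderedRing 𝕜] [AddCommGroup E] [Module 𝕜 E] {f : ι → E}
    (h : ¬ AffineIndependent 𝕜 f) :
    ∃ I : Set ι, I.Nonempty ∧ Iᶜ.Nonempty ∧
      (convexHull 𝕜 (f '' I) ∩ convexHull 𝕜 (f '' Iᶜ)).Nonempty := by
  obtain ⟨I, x, hxI, hxIc⟩ := Convex.radon_partition h
  exact ⟨I, image_nonempty.1 (convexHull_nonempty_iff.1 ⟨x, hxI⟩),
    image_nonempty.1 (convexHull_nonempty_iff.1 ⟨x, hxIc⟩), x, hxI, hxIc⟩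

theorem convexHull_image_subset_convexHull_biUnion {𝕜 E ι : Type*} [Semiring 𝕜] [PartialOrder 𝕜]
    [AddCommMonoid E] [Module 𝕜 E] {P : ι → Set E} {y : ι → E} {S : Set ι}
    (hy : ∀ i ∈ S, y i ∈ convexHull 𝕜 (P i)) :
    convexHull 𝕜 (y '' S) ⊆ convexHull 𝕜 (⋃ i ∈ S, P i) :=
  convexHull_min
    (image_subset_iff.2 fun i hi ↦ convexHull_mono (subset_biUnion_of_mem hi) (hy i hi))
    (convex_convexHull 𝕜 _)

theorem radon_partition_of_degenerate_colorful_selection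
    {d : ℕ} (P : Fin d → Finset (EuclideanSpace ℝ (Fin d)))
    (y : Fin d → EuclideanSpace ℝ (Fin d))
    (hy : ∀ i, y i ∈ convexHull ℝ (P i : Set (EuclideanSpace ℝ (Fin d))))
    (hdim : (Module.finrank ℝ (affineSpan ℝ (Set.range y)).direction : ℤ) ≤ (d : ℤ) - 2) :
    ∃ I : Finset (Fin d), I.Nonempty ∧ Iᶜ.Nonempty ∧
      (convexHull ℝ (⋃ i ∈ I, (P i : Set (EuclideanSpace ℝ (Fin d)))) ∩
        convexHull ℝ (⋃ i ∈ Iᶜ, (P i : Set (EuclideanSpace ℝ (Fin d))))).Nonempty := by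
  classical
  have hdep : ¬ AffineIndependent ℝ y :=
    not_affineIndependent_of_finrank_direction_add_one_lt (by simp only [Fintype.card_fin]; omega)
  obtain ⟨I, hI, hIc, x, hxI, hxIc⟩ := exists_nonempty_radon_partition hdep
  refine ⟨I.toFinset, by simpa using hI, by rwa [← toFinset_compl, toFinset_nonempty], x, ?_, ?_⟩
  · simpa using convexHull_image_subset_convexHull_biUnion (fun i _ ↦ hy i) hxI
  · simpa using convexHull_image_subset_convexHull_biUnion (fun i _ ↦ hy i) hxIc
end

section
/- Let P_1, ..., P_d be finite point sets in R^d and suppose I, J is a partition of [d] into nonempty disjoint sets with conv(⋃_{i∈I} P_i) ∩ conv(⋃_{j∈J} P_j) ≠ ∅. Then there exist points x_1 ∈ conv(P_1), ..., x_d ∈ conv(P_d) whose affine hull has dimension at most d−2. -/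
/-!
The convex hull of a union is the iterated convex join of the hulls of its parts, so a common
point `p` of the two convex hulls is a convex combination of points `x i ∈ conv (P i)`, `i ∈ I`,
and likewise of points `x i ∈ conv (P i)`, `i ∈ Iᶜ`. The assembled family `x` then splits into
two parts, with `|I|` and `d - |I|` points, whose affine spans meet at `p`, so its affine span
has dimension at most `(|I| - 1) + (d - |I| - 1) = d - 2`.
-/

open Set

section ColorfulSelection

variable {R E ι : Type*} [Field R] [LinearOrder R] [IsStrictOrderedRing R]
  [AddCommGroup E] [Module R E]

theorem exists_mem_convexHull_image_of_mem_convexHull_biUnion {S : ι → Set E}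
    (hS : ∀ i, (S i).Nonempty) (I : Finset ι) {p : E}
    (hp : p ∈ convexHull R (⋃ i ∈ I, S i)) :
    ∃ x : ι → E, (∀ i, x i ∈ convexHull R (S i)) ∧ p ∈ convexHull R (x '' I) := by
  classical
  induction I using Finset.induction_on generalizing p with
  | empty => simp at hp
  | insert a I ha ih =>
    rw [Finset.set_biUnion_insert] at hp
    rcases (⋃ i ∈ I, S i).eq_empty_or_nonempty with hempty | hne
    · rw [hempty, union_empty] at hp
      choose y hy using hS
      refine ⟨Function.update y a p, fun i => ?_, subset_convexHull R _ ⟨a, by simp⟩⟩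
      rcases eq_or_ne i a with rfl | hia
      · simpa using hp
      · simpa [hia] using subset_convexHull R _ (hy i)
    · rw [convexHull_union (hS a) hne, mem_convexJoin] at hp
      obtain ⟨q, hq, r, hr, hpqr⟩ := hp
      obtain ⟨x, hx, hrx⟩ := ih hr
      have himage : Function.update x a q '' ↑(insert a I) = insert q (x '' I) := by
        rw [Finset.coe_insert, image_insert_eq, Function.update_self,
          EqOn.image_eq fun i hi => Function.update_of_ne (ne_of_mem_of_not_mem hi ha) q x]
      refine ⟨Function.update x a q, fun i => ?_, ?_⟩
      · rcases eq_or_ne i a with rfl | hia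
        · simpa using hq
        · simpa [hia] using hx i
      · rw [himage, convexHull_insert (convexHull_nonempty_iff.1 ⟨r, hrx⟩)]
        exact mem_convexJoin.2 ⟨q, rfl, r, hrx, hpqr⟩

end ColorfulSelection

section AffineDimension

variable {k V P ι : Type*} [Field k] [AddCommGroup V] [Module k V] [AddTorsor V P]

theorem finrank_vectorSpan_union_le {s t : Set P} [FiniteDimensional k (vectorSpan k s)]
    [FiniteDimensional k (vectorSpan k t)] {p : P} (hs : p ∈ affineSpan k s)
    (ht : p ∈ affineSpan k t) :
    Module.finrank k (vectorSpan k (s ∪ t)) ≤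
      Module.finrank k (vectorSpan k s) + Module.finrank k (vectorSpan k t) := by
  rw [← direction_affineSpan, AffineSubspace.span_union,
    AffineSubspace.direction_sup_eq_sup_direction hs ht, direction_affineSpan, direction_affineSpan]
  exact Submodule.finrank_add_le_finrank_add_finrank _ _

theorem finrank_vectorSpan_range_add_two_le [Fintype ι] [DecidableEq ι] (x : ι → P) {I : Finset ι}
    (hI : I.Nonempty) (hIc : Iᶜ.Nonempty) {p : P} (hpI : p ∈ affineSpan k (x '' I))
    (hpIc : p ∈ affineSpan k (x '' ↑Iᶜ)) :
    Module.finrank k (vectorSpan k (range x)) + 2 ≤ Fintype.card ι := by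
  classical
  have hrange : range x = x '' I ∪ x '' ↑Iᶜ := by
    rw [← image_union, ← Finset.coe_union, Finset.union_compl, Finset.coe_univ, image_univ]
  have hdimI := finrank_vectorSpan_image_finset_le k x I (Nat.sub_add_cancel hI.card_pos).symm
  have hdimIc :=
    finrank_vectorSpan_image_finset_le k x Iᶜ (Nat.sub_add_cancel hIc.card_pos).symm
  rw [Finset.coe_image] at hdimI hdimIc
  have hunion := finrank_vectorSpan_union_le hpI hpIc
  have hcard := Finset.card_add_card_compl I
  have := hI.card_pos
  have := hIc.card_pos
  rw [hrange]
  omega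

end AffineDimension

theorem degenerate_colorful_selection_of_intersecting_partition
    {d : ℕ} (P : Fin d → Finset (EuclideanSpace ℝ (Fin d)))
    (hne : ∀ i, (P i).Nonempty)
    (I : Finset (Fin d)) (hI : I.Nonempty) (hIc : Iᶜ.Nonempty)
    (hint : (convexHull ℝ (⋃ i ∈ I, (P i : Set (EuclideanSpace ℝ (Fin d)))) ∩
        convexHull ℝ (⋃ i ∈ Iᶜ, (P i : Set (EuclideanSpace ℝ (Fin d))))).Nonempty) :
    ∃ x : Fin d → EuclideanSpace ℝ (Fin d),
      (∀ i, x i ∈ convexHull ℝ (P i : Set (EuclideanSpace ℝ (Fin d)))) ∧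
      (Module.finrank ℝ (affineSpan ℝ (Set.range x)).direction : ℤ) ≤ (d : ℤ) - 2 := by
  classical
  obtain ⟨p, hpI, hpIc⟩ := hint
  obtain ⟨y, hy, hpy⟩ :=
    exists_mem_convexHull_image_of_mem_convexHull_biUnion (fun i => (hne i).to_set) I hpI
  obtain ⟨z, hz, hpz⟩ :=
    exists_mem_convexHull_image_of_mem_convexHull_biUnion (fun i => (hne i).to_set) Iᶜ hpIc
  let x := (I : Set (Fin d)).piecewise y z
  have hxI : x '' I = y '' I := (Set.piecewise_eqOn _ y z).image_eq
  have hxIc : x '' ↑Iᶜ = z '' ↑Iᶜ := by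
    rw [Finset.coe_compl]; exact (Set.piecewise_eqOn_compl _ y z).image_eq
  refine ⟨x, fun i => ?_, ?_⟩
  · by_cases hi : i ∈ I <;> simp [x, hi, hy i, hz i]
  · have hdim := finrank_vectorSpan_range_add_two_le x hI hIc
      (hxI ▸ convexHull_subset_affineSpan _ hpy) (hxIc ▸ convexHull_subset_affineSpan _ hpz)
    rw [Fintype.card_fin] at hdim
    rw [direction_affineSpan]
    omega
end

section
/- Finite point sets P_1, ..., P_d in R^d are well-separated (i.e., for every choice of distinct indices i_1, ..., i_k and points y_j ∈ conv(P_{i_j}), the affine hull of {y_1, ..., y_k} has dimension exactly k−1) if and only if for every pair of disjoint nonempty index sets I, J ⊆ [d], the sets conv(⋃_{i∈I} P_i) and conv(⋃_{j∈J} P_j) are disjoint. -/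
/-!
A point of `conv (⋃ i ∈ I, P i)` is a convex combination of points `y i ∈ conv (P i)`, one per
colour of some `I' ⊆ I`. A common point of the hulls for disjoint `I` and `J` thus gives a
colourful selection indexed by `I' ∪ J'` in which the hulls of the `I'`-part and of the `J'`-part
meet, which is impossible for an affinely independent family. Conversely, Radon's theorem splits
an affinely dependent colourful selection into two parts whose hulls meet, and these hulls lie in
the hulls of the corresponding unions of colour classes.
-/

open Set

/-- `P` is well-separated: every colorful selection of points, one from the convex hull of
each of `k` distinct color classes, is affinely independent. -/
def WellSeparated {d : ℕ} (P : Fin d → Finset (EuclideanSpace ℝ (Fin d))) : Prop :=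
  ∀ (k : ℕ) (ι : Fin k → Fin d), Function.Injective ι →
    ∀ y : Fin k → EuclideanSpace ℝ (Fin d),
      (∀ j, y j ∈ convexHull ℝ (P (ι j) : Set (EuclideanSpace ℝ (Fin d)))) →
      AffineIndependent ℝ y

section

variable {ι κ 𝕜 E : Type*} [Semiring 𝕜] [PartialOrder 𝕜] [AddCommMonoid E]
  [Module 𝕜 E]

theorem convexHull_image_subset_convexHull_biUnion_s2 [DecidableEq ι] {S : ι → Set E}
    {f : κ → ι} {y : κ → E} {A : Finset κ} (hy : ∀ j ∈ A, y j ∈ convexHull 𝕜 (S (f j))) :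
    convexHull 𝕜 (y '' A) ⊆ convexHull 𝕜 (⋃ i ∈ A.image f, S i) :=
  convexHull_min (image_subset_iff.2 fun j hj ↦ convexHull_mono
    (Finset.subset_set_biUnion_of_mem (Finset.mem_image_of_mem f hj)) (hy j hj))
    (convex_convexHull 𝕜 _)

end

section

variable {ι 𝕜 E : Type*} [Field 𝕜] [LinearOrder 𝕜] [IsStrictOrderedRing 𝕜]
  [AddCommGroup E] [Module 𝕜 E]

theorem exists_subset_mem_convexHull_image_of_mem_convexHull_biUnion
    {S : ι → Set E} {I : Finset ι} {x : E} (hx : x ∈ convexHull 𝕜 (⋃ i ∈ I, S i)) :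
    ∃ J ⊆ I, ∃ y : ι → E,
      (∀ i ∈ J, y i ∈ convexHull 𝕜 (S i)) ∧ x ∈ convexHull 𝕜 (y '' J) := by
  classical
  induction I using Finset.induction_on generalizing x with
  | empty => simp at hx
  | insert a I ha ih =>
    rw [Finset.set_biUnion_insert] at hx
    rcases (S a).eq_empty_or_nonempty with hSa | hSa
    · rw [hSa, empty_union] at hx
      obtain ⟨J, hJ, y, hy, hxy⟩ := ih hx
      exact ⟨J, hJ.trans (Finset.subset_insert a I), y, hy, hxy⟩
    rcases (⋃ i ∈ I, S i).eq_empty_or_nonempty with hU | hU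
    · rw [hU, union_empty] at hx
      exact ⟨{a}, by simp, fun _ ↦ x, by simpa using hx, by simp⟩
    obtain ⟨ya, hya, z, hz, hxz⟩ :=
      mem_convexJoin.1 (convexHull_union (𝕜 := 𝕜) hSa hU ▸ hx)
    obtain ⟨J, hJ, y, hy, hzy⟩ := ih hz
    have haJ : a ∉ J := fun h ↦ ha (hJ h)
    have hyJ : Function.update y a ya '' J = y '' J :=
      image_congr fun i hi ↦ Function.update_of_ne (ne_of_mem_of_not_mem hi haJ) _ _
    refine ⟨insert a J, Finset.insert_subset_insert a hJ, Function.update y a ya, ?_, ?_⟩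
    · intro i hi
      rcases Finset.mem_insert.1 hi with rfl | hi
      · simpa using hya
      · simpa [ne_of_mem_of_not_mem hi haJ] using hy i hi
    · refine (convex_convexHull 𝕜 _).segment_subset (subset_convexHull 𝕜 _ ?_)
        (convexHull_mono ?_ (hyJ ▸ hzy)) hxz
      · exact ⟨a, by simp, by simp⟩
      · exact image_mono (by simp)

theorem AffineIndependent.disjoint_convexHull_image [DecidableEq ι]
    {p : ι → E} {s t : Finset ι} (hp : AffineIndependent 𝕜 fun i : ↥(s ∪ t) ↦ p i)
    (hst : Disjoint s t) : Disjoint (convexHull 𝕜 (p '' s)) (convexHull 𝕜 (p '' t)) := by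
  classical
  have hinj : InjOn p ↑(s ∪ t) := fun i hi j hj h ↦
    congrArg Subtype.val (hp.injective (a₁ := ⟨i, hi⟩) (a₂ := ⟨j, hj⟩) h)
  have hrange : range (fun i : ↥(s ∪ t) ↦ p i) = ↑((s ∪ t).image p) := by
    ext; simp
  have hpts : AffineIndependent 𝕜 ((↑) : ↥((s ∪ t).image p) → E) := by
    have h := hp.range
    rwa [hrange] at h
  have hinter := hpts.convexHull_inter (t₁ := s.image p) (t₂ := t.image p)
    (Finset.image_subset_image Finset.subset_union_left)
    (Finset.image_subset_image Finset.subset_union_right)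
  rw [Finset.coe_image, Finset.coe_image, ← hinj.image_inter (by simp) (by simp)] at hinter
  rw [disjoint_iff_inter_eq_empty, ← hinter, ← Finset.coe_inter,
    Finset.disjoint_iff_inter_eq_empty.1 hst]
  simp

end

theorem WellSeparated.affineIndependent {d : ℕ}
    {P : Fin d → Finset (EuclideanSpace ℝ (Fin d))} (hP : WellSeparated P)
    {K : Finset (Fin d)} {y : Fin d → EuclideanSpace ℝ (Fin d)}
    (hy : ∀ i ∈ K, y i ∈ convexHull ℝ (P i : Set (EuclideanSpace ℝ (Fin d)))) :
    AffineIndependent ℝ fun i : K ↦ y i := by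
  let e : K ≃ Fin K.card := K.equivFin
  have h := hP K.card (fun j ↦ e.symm j) (Subtype.val_injective.comp e.symm.injective)
    (fun j ↦ y (e.symm j)) (fun j ↦ hy _ (e.symm j).2)
  simpa [Function.comp_def] using h.comp_embedding e.toEmbedding

theorem WellSeparated.disjoint_convexHull_biUnion {d : ℕ}
    {P : Fin d → Finset (EuclideanSpace ℝ (Fin d))} (hP : WellSeparated P)
    {I J : Finset (Fin d)} (hIJ : Disjoint I J) :
    Disjoint (convexHull ℝ (⋃ i ∈ I, (P i : Set (EuclideanSpace ℝ (Fin d)))))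
      (convexHull ℝ (⋃ j ∈ J, (P j : Set (EuclideanSpace ℝ (Fin d))))) := by
  refine disjoint_left.2 fun x hxI hxJ ↦ ?_
  obtain ⟨I', hI', y₁, hy₁, hx₁⟩ :=
    exists_subset_mem_convexHull_image_of_mem_convexHull_biUnion hxI
  obtain ⟨J', hJ', y₂, hy₂, hx₂⟩ :=
    exists_subset_mem_convexHull_image_of_mem_convexHull_biUnion hxJ
  have hIJ' : Disjoint I' J' := hIJ.mono hI' hJ'
  set y := I'.piecewise y₁ y₂
  have hyI : y '' I' = y₁ '' I' := image_congr fun i hi ↦ I'.piecewise_eq_of_mem _ _ hi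
  have hyJ : y '' J' = y₂ '' J' :=
    image_congr fun i hi ↦ I'.piecewise_eq_of_notMem _ _ (Finset.disjoint_right.1 hIJ' hi)
  have hy : ∀ i ∈ I' ∪ J', y i ∈ convexHull ℝ (P i : Set (EuclideanSpace ℝ (Fin d))) := by
    intro i hi
    rcases Finset.mem_union.1 hi with hi | hi
    · simpa [y, hi] using hy₁ i hi
    · simpa [y, Finset.disjoint_right.1 hIJ' hi] using hy₂ i hi
  exact disjoint_left.1 ((hP.affineIndependent hy).disjoint_convexHull_image hIJ')
    (hyI ▸ hx₁) (hyJ ▸ hx₂)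

theorem wellSeparated_iff_disjoint_convexHulls
    {d : ℕ} (P : Fin d → Finset (EuclideanSpace ℝ (Fin d))) :
    WellSeparated P ↔
      ∀ I J : Finset (Fin d), I.Nonempty → J.Nonempty → Disjoint I J →
        Disjoint (convexHull ℝ (⋃ i ∈ I, (P i : Set (EuclideanSpace ℝ (Fin d)))))
          (convexHull ℝ (⋃ j ∈ J, (P j : Set (EuclideanSpace ℝ (Fin d))))) := by
  refine ⟨fun hP I J _ _ hIJ ↦ hP.disjoint_convexHull_biUnion hIJ, fun h k ι hι y hy ↦ ?_⟩
  by_contra hdep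
  obtain ⟨A, z, hzA, hzB⟩ := Convex.radon_partition hdep
  let F (B : Set (Fin k)) : Finset (Fin d) := (toFinite B).toFinset.image ι
  have hsub (B : Set (Fin k)) : convexHull ℝ (y '' B) ⊆
      convexHull ℝ (⋃ i ∈ F B, (P i : Set (EuclideanSpace ℝ (Fin d)))) := by
    have hB := convexHull_image_subset_convexHull_biUnion_s2 (S := fun i ↦ (P i : Set _)) (f := ι)
      (y := y) (A := (toFinite B).toFinset) fun j _ ↦ hy j
    rwa [Finite.coe_toFinset] at hB
  have hne (B : Set (Fin k)) (hz : z ∈ convexHull ℝ (y '' B)) : (F B).Nonempty :=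
    ((toFinite B).toFinset_nonempty.2 (convexHull_nonempty_iff.1 ⟨z, hz⟩).of_image).image ι
  have hdisj : Disjoint (F A) (F Aᶜ) :=
    (Finset.disjoint_image hι).2 (Finite.disjoint_toFinset.2 disjoint_compl_right)
  exact disjoint_left.1 (h _ _ (hne A hzA) (hne Aᶜ hzB) hdisj) (hsub A hzA) (hsub Aᶜ hzB)
end

section
/- Let H_p and H_q be two hyperplanes in R^d such that R = H_p ∩ H_q is a (d−2)-flat, and let K ⊂ R^d be a convex set intersecting both H_p and H_q but disjoint from R. Suppose p ∈ K ∩ H_p and q ∈ K ∩ H_q, and suppose |K' ∩ H_p^+| = |K' ∩ H_q^+| for the finite set K' ⊆ K in question (same counts on the positive sides). Then the open segment from p to q is contained in (H_p^+ ∩ H_q^+) ∪ (H_p^− ∩ H_q^−), i.e., it lies entirely in one of these two open double-wedge cells. -/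
/-!
On the convex set `K = conv P`, which misses `H_p ∩ H_q`, the side of `H_q` is constant along the
slice `K ∩ H_p` (a sign change would make a segment inside that slice cross `H_q`). If `p` were
on the positive side of `H_q` and `q` on the negative side of `H_p`, then every point of `P` on
the closed positive side of `H_p` would lie strictly on the positive side of `H_q`: the segment
from `q` to it crosses `H_p` inside `K`, at a point strictly above `H_q`. Adding `q` itself shows
that `H_q^+` then contains strictly more points of `P` than `H_p^+`, against the equal counts.
So `p` and `q` lie on matching sides, and the open segment `pq` stays in the matching open cell.
-/

open Set

variable {𝕜 E : Type*} [Field 𝕜] [LinearOrder 𝕜] [IsStrictOrderedRing 𝕜]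
  [AddCommGroup E] [Module 𝕜 E]

namespace LinearMap

theorem image_segment_eq_uIcc (f : E →ₗ[𝕜] 𝕜) (a b : E) :
    f '' segment 𝕜 a b = uIcc (f a) (f b) := by
  simpa [segment_eq_uIcc] using image_segment 𝕜 f.toAffineMap a b

theorem image_openSegment_eq_Ioo (f : E →ₗ[𝕜] 𝕜) {a b : E} (h : f a < f b) :
    f '' openSegment 𝕜 a b = Ioo (f a) (f b) := by
  simpa [openSegment_eq_Ioo h] using image_openSegment 𝕜 f.toAffineMap a b

theorem exists_mem_segment_apply_eq (f : E →ₗ[𝕜] 𝕜) {a b : E} {c : 𝕜}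
    (hc : c ∈ uIcc (f a) (f b)) : ∃ y ∈ segment 𝕜 a b, f y = c := by
  rwa [← image_segment_eq_uIcc] at hc

theorem apply_eq_of_mem_segment (f : E →ₗ[𝕜] 𝕜) {a b y : E} {c : 𝕜} (ha : f a = c)
    (hb : f b = c) (hy : y ∈ segment 𝕜 a b) : f y = c := by
  have hfy : f y ∈ uIcc (f a) (f b) := f.image_segment_eq_uIcc a b ▸ mem_image_of_mem f hy
  simpa [ha, hb] using hfy

theorem openSegment_subset_lt (f : E →ₗ[𝕜] 𝕜) {a b : E} {c : 𝕜} (ha : f a = c)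
    (hb : c < f b) : openSegment 𝕜 a b ⊆ {x | c < f x} := by
  subst ha
  exact fun _ hx => (f.image_openSegment_eq_Ioo hb ▸ mem_image_of_mem f hx).1

theorem openSegment_subset_gt (f : E →ₗ[𝕜] 𝕜) {a b : E} {c : 𝕜} (ha : f a = c)
    (hb : f b < c) : openSegment 𝕜 a b ⊆ {x | f x < c} := by
  simpa using (-f).openSegment_subset_lt (c := -c) (by simp [ha]) (by simpa using hb)

end LinearMap

section Wedge

variable {K : Set E} {f g : E →ₗ[𝕜] 𝕜} {c e : 𝕜}

theorem Convex.lt_apply_of_lt_apply_of_apply_eq (hK : Convex 𝕜 K)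
    (hR : K ∩ {x | f x = c} ∩ {x | g x = e} = ∅) {y p : E} (hy : y ∈ K) (hp : p ∈ K)
    (hfy : f y = c) (hfp : f p = c) (hgp : e < g p) : e < g y := by
  by_contra! hgy
  obtain ⟨z, hz, hgz⟩ := g.exists_mem_segment_apply_eq (a := y) (b := p) (c := e)
    (mem_uIcc.2 (.inl ⟨hgy, hgp.le⟩))
  have hfz : f z = c := f.apply_eq_of_mem_segment hfy hfp hz
  exact hR.subset ⟨⟨hK.segment_subset hy hp hz, hfz⟩, hgz⟩

theorem Convex.lt_apply_of_le_apply (hK : Convex 𝕜 K)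
    (hR : K ∩ {x | f x = c} ∩ {x | g x = e} = ∅) {p q x : E} (hp : p ∈ K) (hq : q ∈ K)
    (hx : x ∈ K) (hfp : f p = c) (hgq : g q = e) (hgp : e < g p) (hfq : f q < c)
    (hfx : c ≤ f x) : e < g x := by
  obtain ⟨z, hz, hfz⟩ := f.exists_mem_segment_apply_eq (a := q) (b := x) (c := c)
    (mem_uIcc.2 (.inl ⟨hfq.le, hfx⟩))
  have hgz : e < g z := hK.lt_apply_of_lt_apply_of_apply_eq hR (hK.segment_subset hq hx hz) hp
    hfz hfp hgp
  have hgz' : g z ≤ max e (g x) := hgq ▸ (g.image_segment_eq_uIcc q x ▸ mem_image_of_mem g hz).2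
  by_contra! hgx
  exact (hgz.trans_le hgz').ne' (max_eq_left hgx)

theorem ncard_setOf_le_lt_of_convexHull (P : Finset E)
    (hR : convexHull 𝕜 (P : Set E) ∩ {x | f x = c} ∩ {x | g x = e} = ∅) {p q : E}
    (hpP : p ∈ P) (hqP : q ∈ P) (hfp : f p = c) (hgq : g q = e) (hgp : e < g p)
    (hfq : f q < c) :
    {x ∈ (P : Set E) | c ≤ f x}.ncard < {x ∈ (P : Set E) | e ≤ g x}.ncard := by
  have hK := convex_convexHull 𝕜 (P : Set E)
  have hPK : (P : Set E) ⊆ convexHull 𝕜 (P : Set E) := subset_convexHull 𝕜 _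
  refine ncard_lt_ncard ⟨fun x ⟨hxP, hfx⟩ => ⟨hxP, ?_⟩, fun h => ?_⟩
    (P.finite_toSet.subset fun _ hx => hx.1)
  · exact (hK.lt_apply_of_le_apply hR (hPK hpP) (hPK hqP) (hPK hxP) hfp hgq hgp hfq hfx).le
  · exact hfq.not_ge (h ⟨hqP, hgq.ge⟩).2

end Wedge

theorem openSegment_in_double_wedge_cell_general
    {d : ℕ} (P : Finset (EuclideanSpace ℝ (Fin d)))
    (fp fq : EuclideanSpace ℝ (Fin d) →ₗ[ℝ] ℝ) (cp cq : ℝ)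
    (hR : convexHull ℝ (P : Set (EuclideanSpace ℝ (Fin d))) ∩
        {x | fp x = cp} ∩ {x | fq x = cq} = ∅)
    (hcount : {x ∈ (P : Set (EuclideanSpace ℝ (Fin d))) | cp ≤ fp x}.ncard =
      {x ∈ (P : Set (EuclideanSpace ℝ (Fin d))) | cq ≤ fq x}.ncard)
    (p q : EuclideanSpace ℝ (Fin d)) (hpP : p ∈ P) (hqP : q ∈ P)
    (hp1 : fp p = cp) (hp2 : fq p ≠ cq) (hq1 : fq q = cq) (hq2 : fp q ≠ cp) :
    openSegment ℝ p q ⊆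
      ({x | cp < fp x} ∩ {x | cq < fq x}) ∪ ({x | fp x < cp} ∩ {x | fq x < cq}) := by
  have hR' : convexHull ℝ (P : Set (EuclideanSpace ℝ (Fin d))) ∩
      {x | fq x = cq} ∩ {x | fp x = cp} = ∅ := by
    rwa [inter_right_comm]
  rcases hp2.lt_or_gt with hp | hp <;> rcases hq2.lt_or_gt with hq | hq
  · exact subset_union_of_subset_right (subset_inter
      (fp.openSegment_subset_gt hp1 hq)
      (openSegment_symm ℝ q p ▸ fq.openSegment_subset_gt hq1 hp)) _
  · exact absurd hcount
      (ncard_setOf_le_lt_of_convexHull P hR' hqP hpP hq1 hp1 hq hp).ne'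
  · exact absurd hcount
      (ncard_setOf_le_lt_of_convexHull P hR hpP hqP hp1 hq1 hp hq).ne
  · exact subset_union_of_subset_left (subset_inter
      (fp.openSegment_subset_lt hp1 hq)
      (openSegment_symm ℝ q p ▸ fq.openSegment_subset_lt hq1 hp)) _

theorem openSegment_in_double_wedge_cell
    {d : ℕ} (P : Finset (EuclideanSpace ℝ (Fin d)))
    (fp fq : EuclideanSpace ℝ (Fin d) →ₗ[ℝ] ℝ) (cp cq : ℝ)
    (hfp : fp ≠ 0) (hfq : fq ≠ 0)
    (hconvp : (convexHull ℝ (P : Set (EuclideanSpace ℝ (Fin d))) ∩ {x | fp x = cp}).Nonempty)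
    (hconvq : (convexHull ℝ (P : Set (EuclideanSpace ℝ (Fin d))) ∩ {x | fq x = cq}).Nonempty)
    (hR : convexHull ℝ (P : Set (EuclideanSpace ℝ (Fin d))) ∩
        {x | fp x = cp} ∩ {x | fq x = cq} = ∅)
    (hcount : {x ∈ (P : Set (EuclideanSpace ℝ (Fin d))) | cp ≤ fp x}.ncard =
      {x ∈ (P : Set (EuclideanSpace ℝ (Fin d))) | cq ≤ fq x}.ncard)
    (p q : EuclideanSpace ℝ (Fin d)) (hpP : p ∈ P) (hqP : q ∈ P)
    (hp1 : fp p = cp) (hp2 : fq p ≠ cq) (hq1 : fq q = cq) (hq2 : fp q ≠ cp) :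
    openSegment ℝ p q ⊆
      ({x | cp < fp x} ∩ {x | cq < fq x}) ∪ ({x | fp x < cp} ∩ {x | fq x < cq}) :=
  openSegment_in_double_wedge_cell_general P fp fq cp cq hR hcount p q hpP hqP hp1 hp2 hq1 hq2
end

section
/- Let P_1 and P_2 be finite point sets in R^2 in general position (no three points on a line) and well-separated (conv(P_1) ∩ conv(P_2) = ∅). Then for any two distinct oriented lines L_p and L_q, each passing through one point of P_1 and one point of P_2, the α-vectors of L_p and L_q differ; that is, (|P_1 ∩ L_p^+|, |P_2 ∩ L_p^+|) ≠ (|P_1 ∩ L_q^+|, |P_2 ∩ L_q^+|). -/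
/-!
Suppose the α-vectors agree. With `F_p x = det (p₂ - p₁, x - p₁)` and `F_q` likewise, the
halfplanes are `L_p⁺ = {F_p ≥ 0}` and `L_q⁺ = {F_q ≥ 0}`. Let `f` be a linear functional with
`f x < f y` for `x ∈ P₁`, `y ∈ P₂`, and put `Ψ = f (q₂ - q₁) F_p - f (p₂ - p₁) F_q`, which is
positive on `L_p⁺ \ L_q⁺` and negative on `L_q⁺ \ L_p⁺`. Within each colour class these two
differences have the same size, and `p_i` (resp. `q_i`) lies in the first (resp. second) one
as soon as `Ψ(p_i) > 0` (resp. `Ψ(q_i) < 0`); so `Ψ` takes both a nonpositive and a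
nonnegative value on `P₁` and on `P₂`. By Cramer's rule
`Ψ x - Ψ y = det (p₂ - p₁, q₂ - q₁) (f x - f y)`, and since `f` separates the classes this
forces `Ψ ≡ 0`. Hence `q₁, q₂ ∈ L_p`, general position gives `q₁ = p₁`, `q₂ = p₂`, and the
orientation condition pins down the unit normal, so `n_p = n_q`.
-/

open Set
open scoped RealInnerProductSpace

namespace Finset

theorem exists_nonpos_of_card_filter_nonneg_eq {α : Type*} {P : Finset α} {F G : α → ℝ}
    {c d : ℝ} (hc : 0 < c) (hd : 0 ≤ d)
    (hcard : #{x ∈ P | 0 ≤ F x} = #{x ∈ P | 0 ≤ G x}) {p : α} (hp : p ∈ P) (hFp : F p = 0) :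
    ∃ x ∈ P, c * F x - d * G x ≤ 0 := by
  classical
  by_contra! hpos
  have hGF : {x ∈ P | 0 ≤ G x} \ {x ∈ P | 0 ≤ F x} = ∅ := by
    refine eq_empty_of_forall_notMem fun x hx => ?_
    simp only [mem_sdiff, mem_filter, not_and, not_le] at hx
    nlinarith [hpos x hx.1.1, hx.1.2, hx.2 hx.1.1]
  have hFG := card_sdiff_comm hcard
  rw [hGF, card_empty, card_eq_zero] at hFG
  have hGp : 0 ≤ G p := by
    by_contra hGp
    have : p ∈ {x ∈ P | 0 ≤ F x} \ {x ∈ P | 0 ≤ G x} := by simp [hp, hFp, hGp]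
    simp [hFG] at this
  nlinarith [hpos p hp]

theorem exists_nonpos_and_exists_nonneg_of_card_filter_nonneg_eq {α : Type*} {P : Finset α}
    {F G : α → ℝ} {c d : ℝ} (hc : 0 < c) (hd : 0 < d)
    (hcard : #{x ∈ P | 0 ≤ F x} = #{x ∈ P | 0 ≤ G x}) {p q : α} (hp : p ∈ P) (hq : q ∈ P)
    (hFp : F p = 0) (hGq : G q = 0) :
    (∃ x ∈ P, c * F x - d * G x ≤ 0) ∧ ∃ x ∈ P, 0 ≤ c * F x - d * G x := by
  refine ⟨exists_nonpos_of_card_filter_nonneg_eq hc hd.le hcard hp hFp, ?_⟩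
  obtain ⟨x, hx, h⟩ := exists_nonpos_of_card_filter_nonneg_eq hd hc.le hcard.symm hq hGq
  exact ⟨x, hx, by linarith⟩

end Finset

theorem eq_zero_of_sub_eq_mul_sub {α : Type*} {Ψ f : α → ℝ} {k : ℝ}
    (hΨ : ∀ x y, Ψ x - Ψ y = k * (f x - f y)) {s t : Set α} (hst : ∀ x ∈ s, ∀ y ∈ t, f x < f y)
    (hs : (∃ x ∈ s, Ψ x ≤ 0) ∧ ∃ x ∈ s, 0 ≤ Ψ x) (ht : (∃ y ∈ t, Ψ y ≤ 0) ∧ ∃ y ∈ t, 0 ≤ Ψ y)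
    (z : α) : Ψ z = 0 := by
  obtain ⟨⟨x₁, hx₁, hΨx₁⟩, ⟨x₂, hx₂, hΨx₂⟩⟩ := hs
  obtain ⟨⟨y₁, hy₁, hΨy₁⟩, ⟨y₂, hy₂, hΨy₂⟩⟩ := ht
  have hk₁ : k ≤ 0 := by nlinarith [hΨ y₁ x₂, hst x₂ hx₂ y₁ hy₁]
  have hk₂ : 0 ≤ k := by nlinarith [hΨ y₂ x₁, hst x₁ hx₁ y₂ hy₂]
  obtain rfl : k = 0 := le_antisymm hk₁ hk₂
  linarith [hΨ z x₁, hΨ z x₂]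

theorem Set.Finite.exists_strongDual_lt_of_disjoint_convexHull {E : Type*} [TopologicalSpace E]
    [AddCommGroup E] [Module ℝ E] [IsTopologicalAddGroup E] [ContinuousSMul ℝ E]
    [LocallyConvexSpace ℝ E] [T2Space E] {s t : Set E} (hs : s.Finite) (ht : t.Finite)
    (hst : Disjoint (convexHull ℝ s) (convexHull ℝ t)) :
    ∃ f : StrongDual ℝ E, ∀ x ∈ s, ∀ y ∈ t, f x < f y := by
  obtain ⟨f, u, v, hfu, huv, hvf⟩ := geometric_hahn_banach_compact_closed (convex_convexHull ℝ s)
    (hs.isCompact_convexHull ℝ) (convex_convexHull ℝ t) (ht.isCompact_convexHull ℝ).isClosed hst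
  exact ⟨f, fun x hx y hy => ((hfu x (subset_convexHull ℝ s hx)).trans huv).trans
    (hvf y (subset_convexHull ℝ t hy))⟩

local notation "ℝ²" => EuclideanSpace ℝ (Fin 2)

def det2 (a b : ℝ²) : ℝ := a 0 * b 1 - a 1 * b 0

@[simp] theorem det2_self (a : ℝ²) : det2 a a = 0 := by simp [det2, mul_comm]

@[simp] theorem det2_zero_right (a : ℝ²) : det2 a 0 = 0 := by simp [det2]

theorem det_eq_det2 (p q n : ℝ²) :
    !![p 0, q 0, n 0; p 1, q 1, n 1; 1, 1, 0].det = det2 (q - p) n := by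
  simp only [Matrix.det_fin_three, Matrix.of_apply, Matrix.cons_val', Matrix.cons_val_zero,
    Matrix.cons_val_fin_one, Matrix.cons_val_one, Matrix.cons_val, det2, PiLp.sub_apply]
  ring

theorem inner_eq_fin_two (x y : ℝ²) : ⟪x, y⟫ = x 0 * y 0 + x 1 * y 1 := by
  simp [PiLp.inner_apply, Fin.sum_univ_two, mul_comm]

theorem det2_sub_right (a x y : ℝ²) : det2 a (x - y) = det2 a x - det2 a y := by
  simp only [det2, PiLp.sub_apply]; ring

theorem det2_smul_eq (a b v : ℝ²) : det2 a b • v = det2 a v • b - det2 b v • a := by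
  ext i
  fin_cases i <;>
    simp only [Fin.zero_eta, Fin.mk_one, det2, PiLp.sub_apply, PiLp.smul_apply, smul_eq_mul] <;>
    ring

theorem det2_smul_map_eq {M F : Type*} [AddCommGroup M] [Module ℝ M] [FunLike F ℝ² M]
    [LinearMapClass F ℝ ℝ² M] (f : F) (a b v : ℝ²) :
    det2 a b • f v = det2 a v • f b - det2 b v • f a := by
  rw [← map_smul, det2_smul_eq, map_sub, map_smul, map_smul]

theorem det2_eq_mul_inner {p q n : ℝ²} (hn : ‖n‖ = 1) (hpq : ⟪p, n⟫ = ⟪q, n⟫) (x : ℝ²) :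
    det2 (q - p) x = det2 (q - p) n * ⟪x, n⟫ := by
  have hn' : n 0 ^ 2 + n 1 ^ 2 = 1 := by
    have := real_inner_self_eq_norm_sq n
    rw [inner_eq_fin_two, hn] at this
    linear_combination this
  rw [inner_eq_fin_two, inner_eq_fin_two] at hpq
  simp only [det2, PiLp.sub_apply, inner_eq_fin_two]
  linear_combination (n 1 * x 0 - n 0 * x 1) * hpq - ((q 0 - p 0) * x 1 - (q 1 - p 1) * x 0) * hn'

theorem inner_le_inner_iff_det2_nonneg {p q n : ℝ²} (hn : ‖n‖ = 1) (hpq : ⟪p, n⟫ = ⟪q, n⟫)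
    (hpqn : 0 < det2 (q - p) n) (x : ℝ²) :
    ⟪p, n⟫ ≤ ⟪x, n⟫ ↔ 0 ≤ det2 (q - p) (x - p) := by
  rw [det2_eq_mul_inner hn hpq, inner_sub_left, mul_nonneg_iff_of_pos_left hpqn, sub_nonneg]

theorem eq_of_det2_pos {p q n n' : ℝ²} (hn : ‖n‖ = 1) (hn' : ‖n'‖ = 1)
    (hpq : ⟪p, n⟫ = ⟪q, n⟫) (hpq' : ⟪p, n'⟫ = ⟪q, n'⟫)
    (hpqn : 0 < det2 (q - p) n) (hpqn' : 0 < det2 (q - p) n') : n = n' := by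
  have h := det2_eq_mul_inner hn hpq n'
  have h' := det2_eq_mul_inner hn' hpq' n
  rw [real_inner_comm] at h'
  have ht : 0 < ⟪n', n⟫ := pos_of_mul_pos_right (h ▸ hpqn') hpqn.le
  have : ⟪n', n⟫ = 1 := by nlinarith
  exact ((inner_eq_one_iff_of_norm_eq_one hn' hn).1 this).symm

theorem exists_eq_smul_of_det2_eq_zero {a w : ℝ²} (ha : a ≠ 0) (h : det2 a w = 0) :
    ∃ t : ℝ, w = t • a := by
  have ha' : a 0 ≠ 0 ∨ a 1 ≠ 0 := by
    by_contra! h0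
    exact ha (by ext i; fin_cases i <;> simp [h0])
  unfold det2 at h
  rcases ha' with ha0 | ha1
  · refine ⟨w 0 / a 0, ?_⟩
    ext i; fin_cases i
    · simp [ha0]
    · simp only [Fin.mk_one, PiLp.smul_apply, smul_eq_mul]; field_simp; linear_combination h
  · refine ⟨w 1 / a 1, ?_⟩
    ext i; fin_cases i
    · simp only [Fin.zero_eta, PiLp.smul_apply, smul_eq_mul]; field_simp; linear_combination -h
    · simp [ha1]

theorem collinear_of_det2_eq_zero {a b c : ℝ²} (hab : a ≠ b) (h : det2 (b - a) (c - a) = 0) :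
    Collinear ℝ {a, b, c} := by
  obtain ⟨t, ht⟩ := exists_eq_smul_of_det2_eq_zero (sub_ne_zero.2 hab.symm) h
  rw [collinear_iff_of_mem (mem_insert a _)]
  refine ⟨b - a, ?_⟩
  simp only [mem_insert_iff, mem_singleton_iff, vadd_eq_add, forall_eq_or_imp, forall_eq]
  exact ⟨⟨0, by simp⟩, ⟨1, by simp⟩, ⟨t, by rw [← ht]; abel⟩⟩

theorem eq_or_eq_of_det2_eq_zero {S : Set ℝ²}
    (hS : ∀ x y z, x ∈ S → y ∈ S → z ∈ S → x ≠ y → y ≠ z → x ≠ z → ¬ Collinear ℝ {x, y, z})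
    {a b c : ℝ²} (ha : a ∈ S) (hb : b ∈ S) (hc : c ∈ S) (hab : a ≠ b)
    (h : det2 (b - a) (c - a) = 0) : c = a ∨ c = b := by
  by_contra! hne
  exact hS a b c ha hb hc hab hne.2.symm hne.1.symm (collinear_of_det2_eq_zero hab h)

open Finset in
theorem ncard_setOf_inner_le_eq {P : Finset ℝ²} {p q n : ℝ²} (hn : ‖n‖ = 1)
    (hpq : ⟪p, n⟫ = ⟪q, n⟫) (hpqn : 0 < det2 (q - p) n) :
    {x ∈ (P : Set ℝ²) | ⟪p, n⟫ ≤ ⟪x, n⟫}.ncard = #{x ∈ P | 0 ≤ det2 (q - p) (x - p)} := by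
  rw [← Set.ncard_coe_finset, Finset.coe_filter]
  simp_rw [inner_le_inner_iff_det2_nonneg hn hpq hpqn, Finset.mem_coe]

theorem alpha_vectors_of_distinct_colorful_lines_differ
    (P1 P2 : Finset (EuclideanSpace ℝ (Fin 2)))
    (hgp : ∀ x y z : EuclideanSpace ℝ (Fin 2),
      x ∈ (P1 : Set (EuclideanSpace ℝ (Fin 2))) ∪ (P2 : Set (EuclideanSpace ℝ (Fin 2))) →
      y ∈ (P1 : Set (EuclideanSpace ℝ (Fin 2))) ∪ (P2 : Set (EuclideanSpace ℝ (Fin 2))) →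
      z ∈ (P1 : Set (EuclideanSpace ℝ (Fin 2))) ∪ (P2 : Set (EuclideanSpace ℝ (Fin 2))) →
      x ≠ y → y ≠ z → x ≠ z → ¬ Collinear ℝ ({x, y, z} : Set (EuclideanSpace ℝ (Fin 2))))
    (hsep : convexHull ℝ (P1 : Set (EuclideanSpace ℝ (Fin 2))) ∩
      convexHull ℝ (P2 : Set (EuclideanSpace ℝ (Fin 2))) = ∅)
    (p1 p2 q1 q2 : EuclideanSpace ℝ (Fin 2))
    (hp1 : p1 ∈ P1) (hp2 : p2 ∈ P2) (hq1 : q1 ∈ P1) (hq2 : q2 ∈ P2)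
    (np nq : EuclideanSpace ℝ (Fin 2)) (hnp : ‖np‖ = 1) (hnq : ‖nq‖ = 1)
    (htp : ⟪p1, np⟫ = ⟪p2, np⟫) (htq : ⟪q1, nq⟫ = ⟪q2, nq⟫)
    (hdetp : 0 < Matrix.det !![p1 0, p2 0, np 0; p1 1, p2 1, np 1; 1, 1, 0])
    (hdetq : 0 < Matrix.det !![q1 0, q2 0, nq 0; q1 1, q2 1, nq 1; 1, 1, 0])
    (hdist : ¬ (affineSpan ℝ ({p1, p2} : Set (EuclideanSpace ℝ (Fin 2))) =
        affineSpan ℝ ({q1, q2} : Set (EuclideanSpace ℝ (Fin 2))) ∧ np = nq)) :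
    ¬ ({x ∈ (P1 : Set (EuclideanSpace ℝ (Fin 2))) | ⟪p1, np⟫ ≤ ⟪x, np⟫}.ncard =
        {x ∈ (P1 : Set (EuclideanSpace ℝ (Fin 2))) | ⟪q1, nq⟫ ≤ ⟪x, nq⟫}.ncard ∧
      {x ∈ (P2 : Set (EuclideanSpace ℝ (Fin 2))) | ⟪p1, np⟫ ≤ ⟪x, np⟫}.ncard =
        {x ∈ (P2 : Set (EuclideanSpace ℝ (Fin 2))) | ⟪q1, nq⟫ ≤ ⟪x, nq⟫}.ncard) := by
  rintro ⟨h1, h2⟩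
  rw [det_eq_det2] at hdetp hdetq
  simp only [ncard_setOf_inner_le_eq hnp htp hdetp, ncard_setOf_inner_le_eq hnq htq hdetq] at h1 h2
  obtain ⟨f, hf⟩ := P1.finite_toSet.exists_strongDual_lt_of_disjoint_convexHull P2.finite_toSet
    (disjoint_iff_inter_eq_empty.2 hsep)
  have hfp : 0 < f (p2 - p1) := by rw [map_sub]; linarith [hf p1 hp1 p2 hp2]
  have hfq : 0 < f (q2 - q1) := by rw [map_sub]; linarith [hf q1 hq1 q2 hq2]
  let Ψ x := f (q2 - q1) * det2 (p2 - p1) (x - p1) - f (p2 - p1) * det2 (q2 - q1) (x - q1)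
  have hΨ : ∀ x y, Ψ x - Ψ y = det2 (p2 - p1) (q2 - q1) * (f x - f y) := by
    intro x y
    have := det2_smul_map_eq f (p2 - p1) (q2 - q1) (x - y)
    rw [map_sub f x y] at this
    simp only [Ψ, det2_sub_right, smul_eq_mul] at this ⊢
    linear_combination this.symm
  have hΨ0 := eq_zero_of_sub_eq_mul_sub hΨ hf
    (Finset.exists_nonpos_and_exists_nonneg_of_card_filter_nonneg_eq hfq hfp h1 hp1 hq1
      (by simp) (by simp))
    (Finset.exists_nonpos_and_exists_nonneg_of_card_filter_nonneg_eq hfq hfp h2 hp2 hq2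
      (by simp) (by simp))
  have hLq_sub_Lp : ∀ z, det2 (q2 - q1) (z - q1) = 0 → det2 (p2 - p1) (z - p1) = 0 := by
    intro z hz
    have := hΨ0 z
    simp only [Ψ, hz, mul_zero, sub_zero] at this
    exact (mul_eq_zero.1 this).resolve_left hfq.ne'
  have hne : ∀ x ∈ P1, ∀ y ∈ P2, x ≠ y := fun x hx y hy => ne_of_apply_ne f (hf x hx y hy).ne
  have hp12 := hne p1 hp1 p2 hp2
  obtain rfl : p1 = q1 := ((eq_or_eq_of_det2_eq_zero hgp (.inl hp1) (.inr hp2) (.inl hq1) hp12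
    (hLq_sub_Lp q1 (by simp))).resolve_right (hne q1 hq1 p2 hp2)).symm
  obtain rfl : p2 = q2 := ((eq_or_eq_of_det2_eq_zero hgp (.inl hp1) (.inr hp2) (.inr hq2) hp12
    (hLq_sub_Lp q2 (by simp))).resolve_left (hne p1 hp1 q2 hq2).symm).symm
  exact hdist ⟨rfl, eq_of_det2_pos hnp hnq htp htq hdetp hdetq⟩
end

section
/- Let P_1, ..., P_d be finite well-separated point sets in R^d in weak general position, and let α = (α_1, ..., α_d) with 1 ≤ α_i ≤ |P_i|. If an α-cut exists, then it is unique: there is at most one oriented hyperplane H passing through one point of each P_i with |H^+ ∩ P_i| = α_i for all i. -/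
open Set
open scoped RealInnerProductSpace

/-- `P` is in weak general position: no hyperplane contains `d+1` points of `⋃ P i`
spanning at least `d-1` colors. -/
def WeakGeneralPosition {d : ℕ} (P : Fin d → Finset (EuclideanSpace ℝ (Fin d))) : Prop :=
  ∀ S : Finset (EuclideanSpace ℝ (Fin d)),
    (S : Set (EuclideanSpace ℝ (Fin d))) ⊆ (⋃ i, (P i : Set (EuclideanSpace ℝ (Fin d)))) →
    S.card = d + 1 →
    d - 1 ≤ {i : Fin d | ∃ y ∈ S, y ∈ P i}.ncard →
    ¬ ∃ (f : EuclideanSpace ℝ (Fin d) →ₗ[ℝ] ℝ) (c : ℝ), f ≠ 0 ∧ ∀ y ∈ S, f y = c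

/-- The `(d+1) × (d+1)` matrix whose first `d` columns are the points `x j` with a `1`
appended, and whose last column is `v` with `c` appended. -/
def colMat {d : ℕ} (x : Fin d → EuclideanSpace ℝ (Fin d))
    (v : EuclideanSpace ℝ (Fin d)) (c : ℝ) : Matrix (Fin (d + 1)) (Fin (d + 1)) ℝ :=
  Matrix.of fun i j =>
    if hi : (i : ℕ) < d then
      (if hj : (j : ℕ) < d then x ⟨j, hj⟩ ⟨i, hi⟩ else v ⟨i, hi⟩)
    else
      (if (j : ℕ) < d then (1 : ℝ) else c)

/-- `(x, n, t)` is an `α`-cut: the oriented hyperplane `{y | ⟪y,n⟫ = t}` with unit normal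
`n` passes through the colorful tuple `x`, is oriented by the positive-determinant
convention, and its closed positive halfspace contains exactly `α i` points of `P i`. -/
def IsAlphaCut {d : ℕ} (P : Fin d → Finset (EuclideanSpace ℝ (Fin d))) (α : Fin d → ℕ)
    (x : Fin d → EuclideanSpace ℝ (Fin d)) (n : EuclideanSpace ℝ (Fin d)) (t : ℝ) : Prop :=
  (∀ i, x i ∈ P i) ∧ ‖n‖ = 1 ∧ (∀ i, ⟪x i, n⟫ = t) ∧ 0 < (colMat x n 0).det ∧
    ∀ i, {y ∈ (P i : Set (EuclideanSpace ℝ (Fin d))) | t ≤ ⟪y, n⟫}.ncard = α i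

/-!
Suppose two `α`-cuts have distinct unit normals `n ≠ n'`. Turn the first hyperplane into the
second one with the reverse orientation through the hyperplanes
`H r = {y | ⟪y, (1 - r) • n - r • n'⟫ = (1 - r) * t - r * t'}`, `0 ≤ r ≤ 1`, whose normals never
vanish. Since both cuts leave `α i` points of `P i` on their positive side, `P i` has a point
weakly above `H 0` and weakly below `H 1` and one the other way round, so the segment between
them meets every `H r`, in a point moving continuously with `r`. By well-separation these `d`
points are affinely independent, hence the orientation determinant never vanishes along the
way, although it is positive at `r = 0` and negative at `r = 1`. Once `n = n'`, the cut with the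
larger offset misses the points of the other one on its hyperplane, so it has too few points.
-/

open Matrix

lemma exists_mem_le_and_le_of_ncard_eq {ι β : Type*} [LinearOrder β] {F : Set ι} (hF : F.Finite)
    {f g : ι → β} {s t : β} (h : {y ∈ F | s ≤ f y}.ncard = {y ∈ F | t ≤ g y}.ncard)
    {w : ι} (hw : w ∈ F) (hgw : g w = t) : ∃ a ∈ F, s ≤ f a ∧ g a ≤ t := by
  by_contra! hlt
  have hsub : {y ∈ F | s ≤ f y} ⊂ {y ∈ F | t ≤ g y} :=
    Set.ssubset_iff_exists.2 ⟨fun y ⟨hyF, hy⟩ => ⟨hyF, (hlt y hyF hy).le⟩,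
      w, ⟨hw, hgw.ge⟩, fun ⟨_, hw'⟩ => (hlt w hw hw').ne' hgw⟩
  exact (Set.ncard_lt_ncard hsub (hF.subset fun y hy => hy.1)).ne h

lemma exists_mem_Icc_one_sub_mul_add_mul_eq_zero {a b : ℝ} (ha : 0 ≤ a) (hb : b ≤ 0) :
    ∃ μ ∈ Icc (0 : ℝ) 1, (1 - μ) * a + μ * b = 0 := by
  rcases (sub_nonneg.2 (hb.trans ha)).eq_or_lt with hab | hab
  · exact ⟨0, left_mem_Icc.2 zero_le_one, by linarith⟩
  · refine ⟨a / (a - b), ⟨div_nonneg ha hab.le, (div_le_one hab).2 (by linarith)⟩, ?_⟩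
    field_simp
    ring

/-- `μ r` is `u / (u - v)` for `u = (1 - r) * a₀ + r * a₁ ≥ 0`, `v = (1 - r) * b₀ + r * b₁ ≤ 0`,
or a constant if `u - v` may vanish (then `a₀ = b₀ = 0` or `a₁ = b₁ = 0`). -/
lemma exists_continuousOn_weight {a₀ a₁ b₀ b₁ : ℝ} (ha₀ : 0 ≤ a₀) (ha₁ : 0 ≤ a₁)
    (hb₀ : b₀ ≤ 0) (hb₁ : b₁ ≤ 0) :
    ∃ μ : ℝ → ℝ, ContinuousOn μ (Icc 0 1) ∧ ∀ r ∈ Icc (0 : ℝ) 1, μ r ∈ Icc (0 : ℝ) 1 ∧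
      (1 - μ r) * ((1 - r) * a₀ + r * a₁) + μ r * ((1 - r) * b₀ + r * b₁) = 0 := by
  rcases (sub_nonneg.2 (hb₀.trans ha₀)).eq_or_lt with h₀ | h₀
  · obtain ⟨μ, hμ, hμ0⟩ := exists_mem_Icc_one_sub_mul_add_mul_eq_zero ha₁ hb₁
    refine ⟨fun _ => μ, continuousOn_const, fun r _ => ⟨hμ, ?_⟩⟩
    linear_combination (1 - r) * (1 - μ) * (by linarith : a₀ = 0) +
      (1 - r) * μ * (by linarith : b₀ = 0) + r * hμ0
  rcases (sub_nonneg.2 (hb₁.trans ha₁)).eq_or_lt with h₁ | h₁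
  · obtain ⟨μ, hμ, hμ0⟩ := exists_mem_Icc_one_sub_mul_add_mul_eq_zero ha₀ hb₀
    refine ⟨fun _ => μ, continuousOn_const, fun r _ => ⟨hμ, ?_⟩⟩
    linear_combination r * (1 - μ) * (by linarith : a₁ = 0) +
      r * μ * (by linarith : b₁ = 0) + (1 - r) * hμ0
  have hD : ∀ r ∈ Icc (0 : ℝ) 1,
      0 < ((1 - r) * a₀ + r * a₁) - ((1 - r) * b₀ + r * b₁) := by
    rintro r ⟨hr0, hr1⟩
    rcases hr0.eq_or_lt with rfl | hr0
    · linarith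
    · nlinarith
  refine ⟨fun r => ((1 - r) * a₀ + r * a₁) / (((1 - r) * a₀ + r * a₁) - ((1 - r) * b₀ + r * b₁)),
    ContinuousOn.div (by fun_prop) (by fun_prop) fun r hr => (hD r hr).ne', fun r hr => ?_⟩
  have hD := hD r hr
  have hu : 0 ≤ (1 - r) * a₀ + r * a₁ := by nlinarith [hr.1, hr.2]
  refine ⟨⟨div_nonneg hu hD.le, (div_le_one hD).2 (by nlinarith [hr.1, hr.2])⟩, ?_⟩
  field_simp
  ring

section InnerProductSpace

variable {E : Type*} [NormedAddCommGroup E] [InnerProductSpace ℝ E]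

lemma one_sub_smul_sub_smul_ne_zero {n n' : E} (hnorm : ‖n‖ = ‖n'‖) (hne : n ≠ n') (r : ℝ) :
    (1 - r) • n - r • n' ≠ 0 := by
  intro h
  have hsmul : (1 - r) • n = r • n' := sub_eq_zero.1 h
  have hn : ‖n‖ ≠ 0 := fun h0 =>
    hne (by rw [norm_eq_zero.1 h0, norm_eq_zero.1 (hnorm ▸ h0 : ‖n'‖ = 0)])
  have habs : |1 - r| = |r| := by
    simpa [norm_smul, ← hnorm, hn] using congrArg norm hsmul
  have hr : r = 1 / 2 := by
    rcases abs_eq_abs.1 habs with h' | h' <;> linarith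
  subst hr
  norm_num at hsmul
  exact hne hsmul

lemma exists_continuousOn_path_inner_eq {C : Set E} (hC : Convex ℝ C) {a b n n' : E} {t t' : ℝ}
    (ha : a ∈ C) (hb : b ∈ C) (han : t ≤ ⟪a, n⟫) (han' : ⟪a, n'⟫ ≤ t') (hbn : ⟪b, n⟫ ≤ t)
    (hbn' : t' ≤ ⟪b, n'⟫) :
    ∃ y : ℝ → E, ContinuousOn y (Icc 0 1) ∧ ∀ r ∈ Icc (0 : ℝ) 1,
      y r ∈ C ∧ ⟪y r, (1 - r) • n - r • n'⟫ = (1 - r) * t - r * t' := by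
  obtain ⟨μ, hμc, hμ⟩ := exists_continuousOn_weight (sub_nonneg.2 han) (sub_nonneg.2 han')
    (sub_nonpos.2 hbn) (sub_nonpos.2 hbn')
  refine ⟨fun r => (1 - μ r) • a + μ r • b, by fun_prop, fun r hr => ⟨?_, ?_⟩⟩
  · exact hC ha hb (sub_nonneg.2 (hμ r hr).1.2) (hμ r hr).1.1 (sub_add_cancel 1 (μ r))
  · simp only [inner_add_left, inner_sub_right, real_inner_smul_left, real_inner_smul_right]
    linear_combination (hμ r hr).2

end InnerProductSpace

section ColMat

variable {d : ℕ}

lemma colMat_mulVec_castSucc (x : Fin d → EuclideanSpace ℝ (Fin d)) (v : EuclideanSpace ℝ (Fin d))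
    (c : ℝ) (w : Fin (d + 1) → ℝ) (i : Fin d) :
    (colMat x v c *ᵥ w) i.castSucc = (∑ j, w j.castSucc • x j + w (Fin.last d) • v) i := by
  simp [Matrix.mulVec, dotProduct, Fin.sum_univ_castSucc, colMat, mul_comm]

lemma colMat_mulVec_last (x : Fin d → EuclideanSpace ℝ (Fin d)) (v : EuclideanSpace ℝ (Fin d))
    (c : ℝ) (w : Fin (d + 1) → ℝ) :
    (colMat x v c *ᵥ w) (Fin.last d) = ∑ j : Fin d, w j.castSucc + w (Fin.last d) * c := by
  simp [Matrix.mulVec, dotProduct, Fin.sum_univ_castSucc, colMat, mul_comm]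

lemma continuous_colMat (c : ℝ) :
    Continuous fun p : (Fin d → EuclideanSpace ℝ (Fin d)) × EuclideanSpace ℝ (Fin d) =>
      colMat p.1 p.2 c := by
  refine continuous_matrix fun i j => ?_
  simp only [colMat, Matrix.of_apply]
  split_ifs <;> fun_prop

lemma det_colMat_ne_zero {y : Fin d → EuclideanSpace ℝ (Fin d)} {ν : EuclideanSpace ℝ (Fin d)}
    {c : ℝ} (hy : AffineIndependent ℝ y) (hν : ν ≠ 0) (hc : ∀ i, ⟪y i, ν⟫ = c) :
    (colMat y ν 0).det ≠ 0 := by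
  intro h0
  obtain ⟨w, hw0, hw⟩ := exists_mulVec_eq_zero_iff.2 h0
  have hsum : ∑ j : Fin d, w j.castSucc = 0 := by
    simpa [colMat_mulVec_last] using congrFun hw (Fin.last d)
  have hvec : ∑ j, w j.castSucc • y j + w (Fin.last d) • ν = 0 := by
    ext i
    simpa [colMat_mulVec_castSucc] using congrFun hw i.castSucc
  have hlast : w (Fin.last d) = 0 := by
    have h := congrArg (⟪·, ν⟫) hvec
    simp only [inner_add_left, sum_inner, real_inner_smul_left, hc, ← Finset.sum_mul, hsum,
      inner_zero_left, zero_mul, zero_add] at h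
    exact (mul_eq_zero.1 h).resolve_right (inner_self_ne_zero.2 hν)
  have hcast : ∀ j : Fin d, w j.castSucc = 0 := by
    rw [hlast, zero_smul, add_zero] at hvec
    exact fun j => affineIndependent_iff.1 hy Finset.univ (fun j : Fin d => w j.castSucc) hsum
      hvec j (Finset.mem_univ j)
  exact hw0 (funext fun j => Fin.lastCases hlast hcast j)

lemma det_colMat_neg (x : Fin d → EuclideanSpace ℝ (Fin d)) (v : EuclideanSpace ℝ (Fin d))
    (c : ℝ) : (colMat x (-v) (-c)).det = -(colMat x v c).det := by
  have h : colMat x (-v) (-c) =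
      (colMat x v c).updateCol (Fin.last d) ((-1 : ℝ) • fun i => colMat x v c i (Fin.last d)) := by
    ext i j
    rcases Fin.eq_castSucc_or_eq_last i with ⟨i, rfl⟩ | rfl <;>
      rcases Fin.eq_castSucc_or_eq_last j with ⟨j, rfl⟩ | rfl <;>
      simp [colMat, Fin.castSucc_ne_last]
  rw [h, det_updateCol_smul, updateCol_eq_self, neg_one_mul]

lemma nonempty_fin_of_det_colMat_ne_zero {x : Fin d → EuclideanSpace ℝ (Fin d)}
    {v : EuclideanSpace ℝ (Fin d)} (h : (colMat x v 0).det ≠ 0) : Nonempty (Fin d) := by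
  rcases d with _ | d
  · simp [colMat] at h
  · exact ⟨0⟩

lemma det_colMat_pos_of_continuousOn {Y : ℝ → Fin d → EuclideanSpace ℝ (Fin d)}
    {ν : ℝ → EuclideanSpace ℝ (Fin d)} {c : ℝ} (hY : ContinuousOn Y (Icc 0 1))
    (hν : ContinuousOn ν (Icc 0 1)) (hne : ∀ r ∈ Icc (0 : ℝ) 1, (colMat (Y r) (ν r) c).det ≠ 0)
    (h0 : 0 < (colMat (Y 0) (ν 0) c).det) : 0 < (colMat (Y 1) (ν 1) c).det := by
  have hcont : ContinuousOn (fun r => (colMat (Y r) (ν r) c).det) (Icc 0 1) :=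
    (continuous_colMat c).matrix_det.comp_continuousOn (hY.prodMk hν)
  by_contra! h1
  obtain ⟨r, hr, hr0⟩ := intermediate_value_Icc' zero_le_one hcont ⟨h1, h0.le⟩
  exact hne r hr hr0

end ColMat

namespace WellSeparated

variable {d : ℕ} {P : Fin d → Finset (EuclideanSpace ℝ (Fin d))}
  {y z : Fin d → EuclideanSpace ℝ (Fin d)} {ν : EuclideanSpace ℝ (Fin d)} {c : ℝ}

lemma affineIndependent_s8 (hws : WellSeparated P)
    (hy : ∀ i, y i ∈ convexHull ℝ (P i : Set (EuclideanSpace ℝ (Fin d)))) :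
    AffineIndependent ℝ y :=
  hws d id Function.injective_id y hy

lemma det_colMat_ne_zero (hws : WellSeparated P)
    (hy : ∀ i, y i ∈ convexHull ℝ (P i : Set (EuclideanSpace ℝ (Fin d)))) (hν : ν ≠ 0)
    (hc : ∀ i, ⟪y i, ν⟫ = c) : (colMat y ν 0).det ≠ 0 :=
  _root_.det_colMat_ne_zero (hws.affineIndependent_s8 hy) hν hc

/-- Along the segment from `z` to `y` the determinant cannot vanish. -/
lemma det_colMat_pos_of_pos (hws : WellSeparated P) (hν : ν ≠ 0)
    (hy : ∀ i, y i ∈ convexHull ℝ (P i : Set (EuclideanSpace ℝ (Fin d))))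
    (hyc : ∀ i, ⟪y i, ν⟫ = c)
    (hz : ∀ i, z i ∈ convexHull ℝ (P i : Set (EuclideanSpace ℝ (Fin d))))
    (hzc : ∀ i, ⟪z i, ν⟫ = c) (h : 0 < (colMat z ν 0).det) : 0 < (colMat y ν 0).det := by
  have key := det_colMat_pos_of_continuousOn (Y := fun r => (1 - r) • z + r • y)
    (ν := fun _ => ν) (by fun_prop) continuousOn_const
    (fun r hr => hws.det_colMat_ne_zero (c := c)
      (fun i => convex_convexHull ℝ _ (hz i) (hy i) (sub_nonneg.2 hr.2) hr.1 (sub_add_cancel 1 r))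
      hν (fun i => by simp only [Pi.add_apply, Pi.smul_apply, inner_add_left,
        real_inner_smul_left, hyc, hzc]; ring))
    (by simpa using h)
  simpa using key

end WellSeparated

namespace IsAlphaCut

variable {d : ℕ} {P : Fin d → Finset (EuclideanSpace ℝ (Fin d))} {α : Fin d → ℕ}
  {x x' : Fin d → EuclideanSpace ℝ (Fin d)} {n n' : EuclideanSpace ℝ (Fin d)} {t t' : ℝ}

lemma le_of_normal_eq (hx : IsAlphaCut P α x n t) (hx' : IsAlphaCut P α x' n t') : t' ≤ t := by
  obtain ⟨i⟩ := nonempty_fin_of_det_colMat_ne_zero hx.2.2.2.1.ne'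
  obtain ⟨a, -, hta, hat⟩ := exists_mem_le_and_le_of_ncard_eq (P i).finite_toSet
    ((hx'.2.2.2.2 i).trans (hx.2.2.2.2 i).symm) (Finset.mem_coe.2 (hx.1 i)) (hx.2.2.1 i)
  exact hta.trans hat

lemma exists_continuousOn_path (hx : IsAlphaCut P α x n t) (hx' : IsAlphaCut P α x' n' t')
    (i : Fin d) :
    ∃ y : ℝ → EuclideanSpace ℝ (Fin d), ContinuousOn y (Icc 0 1) ∧ ∀ r ∈ Icc (0 : ℝ) 1,
      y r ∈ convexHull ℝ (P i : Set (EuclideanSpace ℝ (Fin d))) ∧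
      ⟪y r, (1 - r) • n - r • n'⟫ = (1 - r) * t - r * t' := by
  have hcount := (hx.2.2.2.2 i).trans (hx'.2.2.2.2 i).symm
  obtain ⟨a, ha, han, han'⟩ := exists_mem_le_and_le_of_ncard_eq (P i).finite_toSet hcount
    (Finset.mem_coe.2 (hx'.1 i)) (hx'.2.2.1 i)
  obtain ⟨b, hb, hbn', hbn⟩ := exists_mem_le_and_le_of_ncard_eq (P i).finite_toSet hcount.symm
    (Finset.mem_coe.2 (hx.1 i)) (hx.2.2.1 i)
  exact exists_continuousOn_path_inner_eq (convex_convexHull ℝ _) (subset_convexHull ℝ _ ha)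
    (subset_convexHull ℝ _ hb) han han' hbn hbn'

lemma normal_eq (hws : WellSeparated P) (hx : IsAlphaCut P α x n t)
    (hx' : IsAlphaCut P α x' n' t') : n = n' := by
  by_contra hne
  choose Y hYc hY using hx.exists_continuousOn_path hx'
  have hν := one_sub_smul_sub_smul_ne_zero (hx.2.1.trans hx'.2.1.symm) hne
  have h0 : 0 < (colMat (fun i => Y i 0) n 0).det :=
    hws.det_colMat_pos_of_pos (by simpa using hν 0)
      (fun i => (hY i 0 (left_mem_Icc.2 zero_le_one)).1)
      (fun i => by simpa using (hY i 0 (left_mem_Icc.2 zero_le_one)).2)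
      (fun i => subset_convexHull ℝ _ (hx.1 i)) hx.2.2.1 hx.2.2.2.1
  have h1 : 0 < (colMat (fun i => Y i 1) n' 0).det :=
    hws.det_colMat_pos_of_pos (by simpa using hν 1)
      (fun i => (hY i 1 (right_mem_Icc.2 zero_le_one)).1)
      (fun i => by simpa using (hY i 1 (right_mem_Icc.2 zero_le_one)).2)
      (fun i => subset_convexHull ℝ _ (hx'.1 i)) hx'.2.2.1 hx'.2.2.2.1
  have key := det_colMat_pos_of_continuousOn (Y := fun r i => Y i r)
    (ν := fun r => (1 - r) • n - r • n') (continuousOn_pi.2 hYc) (by fun_prop)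
    (fun r hr => hws.det_colMat_ne_zero (fun i => (hY i r hr).1) (hν r) (fun i => (hY i r hr).2))
    (by simpa using h0)
  have hneg := det_colMat_neg (fun i => Y i 1) n' 0
  simp only [neg_zero] at hneg
  simp only [sub_self, zero_smul, one_smul, zero_sub, hneg] at key
  linarith

end IsAlphaCut

theorem alpha_cut_unique_general
    {d : ℕ} (P : Fin d → Finset (EuclideanSpace ℝ (Fin d))) (α : Fin d → ℕ)
    (hws : WellSeparated P) :
    ∀ (n n' : EuclideanSpace ℝ (Fin d)) (t t' : ℝ),
      (∃ x, IsAlphaCut P α x n t) → (∃ x', IsAlphaCut P α x' n' t') →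
      n = n' ∧ t = t' := by
  rintro n n' t t' ⟨x, hx⟩ ⟨x', hx'⟩
  obtain rfl := hx.normal_eq hws hx'
  exact ⟨rfl, le_antisymm (hx'.le_of_normal_eq hx) (hx.le_of_normal_eq hx')⟩

theorem alpha_cut_unique
    {d : ℕ} (P : Fin d → Finset (EuclideanSpace ℝ (Fin d))) (α : Fin d → ℕ)
    (hws : WellSeparated P) (hwgp : WeakGeneralPosition P)
    (hα : ∀ i, 1 ≤ α i ∧ α i ≤ (P i).card) :
    ∀ (n n' : EuclideanSpace ℝ (Fin d)) (t t' : ℝ),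
      (∃ x, IsAlphaCut P α x n t) → (∃ x', IsAlphaCut P α x' n' t') →
      n = n' ∧ t = t' :=
  alpha_cut_unique_general P α hws
end

section
/- Let P_1, P_2 be finite point sets in R^2 and let L_p, L_q be two distinct oriented lines, L_p through p_1 ∈ P_1, p_2 ∈ P_2 and L_q through q_1 ∈ P_1, q_2 ∈ P_2, having the same α-vector, and suppose L_p ∩ L_q is a point x disjoint from conv(P_1) and conv(P_2). If the open segments p_1q_1 and p_2q_2 both lie in H_p^+ ∩ H_q^+ (or both in H_p^− ∩ H_q^−), then conv(P_1) ∩ conv(P_2) ≠ ∅, i.e., P_1 and P_2 are not well-separated. -/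
/-!
Both lines pass through `x`, so with `rot90 n` the normal `n` turned by a right angle we can write
`pᵢ = x + lᵢ • rot90 np` and `qᵢ = x + rᵢ • rot90 nq`. The determinant conditions say `l₂ < l₁` and
`r₂ < r₁`. The segment conditions put `p₁, p₂` strictly on one side of `L_q` and `q₁, q₂` strictly
on one side of `L_p`, so the `p`'s lie on one open ray of `L_p` from `x`, the `q`'s on one open ray
of `L_q`, and the signs force that, measured outward along these rays, one segment joins the farther
`p` to the nearer `q` and the other the nearer `p` to the farther `q`. Two such segments in a cone
cross, and the crossing point lies in both convex hulls.
-/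

open Set
open scoped RealInnerProductSpace

theorem segment_inter_segment_nonempty_of_cone {E : Type*} [AddCommGroup E] [Module ℝ E]
    (x u v : E) {a a' b b' : ℝ} (ha : 0 < a) (haa' : a < a') (hb : 0 < b) (hbb' : b < b') :
    (segment ℝ (x + a' • u) (x + b • v) ∩ segment ℝ (x + a • u) (x + b' • v)).Nonempty := by
  have hD : 0 < a' * b' - a * b := by nlinarith
  obtain ⟨α, hα⟩ : ∃ α, α = b' * (a' - a) / (a' * b' - a * b) := ⟨_, rfl⟩
  obtain ⟨β, hβ⟩ : ∃ β, β = b * (a' - a) / (a' * b' - a * b) := ⟨_, rfl⟩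
  have hu : (1 - α) * a' = (1 - β) * a := by
    rw [hα, hβ, div_eq_mul_inv, div_eq_mul_inv]
    linear_combination (a - a') * mul_inv_cancel₀ hD.ne'
  have hv : α * b = β * b' := by rw [hα, hβ]; ring
  refine ⟨(1 - β) • (x + a • u) + β • (x + b' • v),
    ⟨1 - α, α, ?_, ?_, by ring, ?_⟩, ⟨1 - β, β, ?_, ?_, by ring, rfl⟩⟩
  · rw [sub_nonneg, hα, div_le_one hD]; nlinarith
  · exact hα ▸ div_nonneg (by nlinarith) hD.le
  · match_scalars
    · ring
    · linear_combination hu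
    · linear_combination hv
  · rw [sub_nonneg, hβ, div_le_one hD]; nlinarith
  · exact hβ ▸ div_nonneg (by nlinarith) hD.le

theorem segment_inter_segment_nonempty_of_mul_sign {E : Type*} [AddCommGroup E] [Module ℝ E]
    (x u v : E) {l m r n s : ℝ} (hml : m < l) (hnr : n < r)
    (hl : 0 < l * s) (hm : 0 < m * s) (hr : r * s < 0) (hn : n * s < 0) :
    (segment ℝ (x + l • u) (x + r • v) ∩ segment ℝ (x + m • u) (x + n • v)).Nonempty := by
  rcases lt_or_gt_of_ne (show s ≠ 0 by rintro rfl; simp at hl) with hs | hs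
  · have h := segment_inter_segment_nonempty_of_cone x (-u) v
      (neg_pos.2 (neg_of_mul_pos_left hl hs.le)) (neg_lt_neg hml)
      (pos_of_mul_neg_left hn hs.le) hnr
    rwa [neg_smul_neg, neg_smul_neg, inter_comm] at h
  · have h := segment_inter_segment_nonempty_of_cone x u (-v)
      (pos_of_mul_pos_left hm hs.le) hml (neg_pos.2 (neg_of_mul_neg_left hr hs.le))
      (neg_lt_neg hnr)
    rwa [neg_smul_neg, neg_smul_neg] at h

def rot90 (v : EuclideanSpace ℝ (Fin 2)) : EuclideanSpace ℝ (Fin 2) := !₂[-v 1, v 0]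

@[simp] theorem rot90_apply_zero (v : EuclideanSpace ℝ (Fin 2)) : rot90 v 0 = -v 1 := rfl

@[simp] theorem rot90_apply_one (v : EuclideanSpace ℝ (Fin 2)) : rot90 v 1 = v 0 := rfl

theorem real_inner_fin_two (a b : EuclideanSpace ℝ (Fin 2)) :
    ⟪a, b⟫ = a 0 * b 0 + a 1 * b 1 := by
  simp [PiLp.inner_apply, Fin.sum_univ_two, mul_comm]

theorem inner_rot90_rot90 (a b : EuclideanSpace ℝ (Fin 2)) : ⟪rot90 a, rot90 b⟫ = ⟪a, b⟫ := by
  simp only [real_inner_fin_two, rot90_apply_zero, rot90_apply_one]; ring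

theorem inner_rot90_swap (a b : EuclideanSpace ℝ (Fin 2)) : ⟪rot90 a, b⟫ = -⟪rot90 b, a⟫ := by
  simp only [real_inner_fin_two, rot90_apply_zero, rot90_apply_one]; ring

theorem det_eq_inner_sub_rot90 (a b c : EuclideanSpace ℝ (Fin 2)) :
    !![a 0, b 0, c 0; a 1, b 1, c 1; 1, 1, 0].det = ⟪a - b, rot90 c⟫ := by
  simp only [Matrix.det_fin_three, Matrix.of_apply, Matrix.cons_val', Matrix.cons_val_zero,
    Matrix.cons_val_fin_one, Matrix.cons_val_one, Matrix.cons_val, real_inner_fin_two,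
    PiLp.sub_apply, rot90_apply_zero, rot90_apply_one]
  ring

theorem exists_eq_add_smul_rot90 {x y n : EuclideanSpace ℝ (Fin 2)} (hn : n ≠ 0)
    (h : ⟪y, n⟫ = ⟪x, n⟫) : ∃ t : ℝ, y = x + t • rot90 n := by
  have hN : n 0 ^ 2 + n 1 ^ 2 ≠ 0 := by
    simpa only [real_inner_fin_two, ← sq] using (inner_self_ne_zero (𝕜 := ℝ)).2 hn
  rw [real_inner_fin_two, real_inner_fin_two] at h
  refine ⟨(n 0 * (y 1 - x 1) - n 1 * (y 0 - x 0)) / (n 0 ^ 2 + n 1 ^ 2), ?_⟩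
  ext i
  fin_cases i <;>
    simp only [Fin.zero_eta, Fin.mk_one, PiLp.add_apply, PiLp.smul_apply, rot90_apply_zero,
      rot90_apply_one, smul_eq_mul] <;>
    field_simp
  · linear_combination n 0 * h
  · linear_combination n 1 * h

theorem segment_inter_segment_nonempty_of_lines {x p₁ p₂ q₁ q₂ np nq : EuclideanSpace ℝ (Fin 2)}
    (hnp : np ≠ 0) (hnq : nq ≠ 0)
    (hp₁ : ⟪p₁, np⟫ = ⟪x, np⟫) (hp₂ : ⟪p₂, np⟫ = ⟪x, np⟫)
    (hq₁ : ⟪q₁, nq⟫ = ⟪x, nq⟫) (hq₂ : ⟪q₂, nq⟫ = ⟪x, nq⟫)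
    (hp : 0 < ⟪p₁ - p₂, rot90 np⟫) (hq : 0 < ⟪q₁ - q₂, rot90 nq⟫) (s : ℝ)
    (hsp₁ : 0 < ⟪p₁ - x, nq⟫ * s) (hsp₂ : 0 < ⟪p₂ - x, nq⟫ * s)
    (hsq₁ : 0 < ⟪q₁ - x, np⟫ * s) (hsq₂ : 0 < ⟪q₂ - x, np⟫ * s) :
    (segment ℝ p₁ q₁ ∩ segment ℝ p₂ q₂).Nonempty := by
  obtain ⟨l, rfl⟩ := exists_eq_add_smul_rot90 hnp hp₁
  obtain ⟨m, rfl⟩ := exists_eq_add_smul_rot90 hnp hp₂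
  obtain ⟨r, rfl⟩ := exists_eq_add_smul_rot90 hnq hq₁
  obtain ⟨n, rfl⟩ := exists_eq_add_smul_rot90 hnq hq₂
  simp only [add_sub_add_left_eq_sub, add_sub_cancel_left, ← sub_smul, real_inner_smul_left,
    inner_rot90_rot90] at hp hq hsp₁ hsp₂ hsq₁ hsq₂
  rw [inner_rot90_swap] at hsq₁ hsq₂
  have hml : m < l := sub_pos.1 (pos_of_mul_pos_left hp real_inner_self_nonneg)
  have hnr : n < r := sub_pos.1 (pos_of_mul_pos_left hq real_inner_self_nonneg)
  refine segment_inter_segment_nonempty_of_mul_sign x _ _ hml hnr (s := ⟪rot90 np, nq⟫ * s)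
    ?_ ?_ ?_ ?_ <;> linarith

theorem real_inner_midpoint_left {E : Type*} [NormedAddCommGroup E] [InnerProductSpace ℝ E]
    (a b n : E) : ⟪midpoint ℝ a b, n⟫ = (⟪a, n⟫ + ⟪b, n⟫) / 2 := by
  rw [midpoint_eq_smul_add, real_inner_smul_left, inner_add_left, invOf_eq_inv, inv_mul_eq_div]

theorem not_wellSeparated_of_same_alpha_vector_dim2_general
    (P1 P2 : Finset (EuclideanSpace ℝ (Fin 2)))
    (p1 p2 q1 q2 : EuclideanSpace ℝ (Fin 2))
    (hp1 : p1 ∈ P1) (hp2 : p2 ∈ P2) (hq1 : q1 ∈ P1) (hq2 : q2 ∈ P2)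
    (np nq : EuclideanSpace ℝ (Fin 2)) (hnp : ‖np‖ = 1) (hnq : ‖nq‖ = 1)
    (htp : ⟪p1, np⟫ = ⟪p2, np⟫) (htq : ⟪q1, nq⟫ = ⟪q2, nq⟫)
    (hdetp : 0 < Matrix.det !![p1 0, p2 0, np 0; p1 1, p2 1, np 1; 1, 1, 0])
    (hdetq : 0 < Matrix.det !![q1 0, q2 0, nq 0; q1 1, q2 1, nq 1; 1, 1, 0])
    (x : EuclideanSpace ℝ (Fin 2))
    (hx : {y : EuclideanSpace ℝ (Fin 2) | ⟪y, np⟫ = ⟪p1, np⟫} ∩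
      {y : EuclideanSpace ℝ (Fin 2) | ⟪y, nq⟫ = ⟪q1, nq⟫} = {x})
    (hseg :
      (openSegment ℝ p1 q1 ⊆ {y | ⟪p1, np⟫ < ⟪y, np⟫} ∩ {y | ⟪q1, nq⟫ < ⟪y, nq⟫} ∧
        openSegment ℝ p2 q2 ⊆ {y | ⟪p1, np⟫ < ⟪y, np⟫} ∩ {y | ⟪q1, nq⟫ < ⟪y, nq⟫}) ∨
      (openSegment ℝ p1 q1 ⊆ {y | ⟪y, np⟫ < ⟪p1, np⟫} ∩ {y | ⟪y, nq⟫ < ⟪q1, nq⟫} ∧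
        openSegment ℝ p2 q2 ⊆ {y | ⟪y, np⟫ < ⟪p1, np⟫} ∩ {y | ⟪y, nq⟫ < ⟪q1, nq⟫})) :
    (convexHull ℝ (P1 : Set (EuclideanSpace ℝ (Fin 2))) ∩
      convexHull ℝ (P2 : Set (EuclideanSpace ℝ (Fin 2)))).Nonempty := by
  obtain ⟨hxp, hxq⟩ : ⟪x, np⟫ = ⟪p1, np⟫ ∧ ⟪x, nq⟫ = ⟪q1, nq⟫ :=
    (hx.symm ▸ mem_singleton x :)
  rw [det_eq_inner_sub_rot90] at hdetp hdetq
  have hcross := segment_inter_segment_nonempty_of_lines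
    (norm_ne_zero_iff.1 (hnp ▸ one_ne_zero)) (norm_ne_zero_iff.1 (hnq ▸ one_ne_zero))
    hxp.symm (htp ▸ hxp.symm) hxq.symm (htq ▸ hxq.symm) hdetp hdetq
  simp only [inner_sub_left] at hcross
  obtain ⟨z, hz₁, hz₂⟩ : (segment ℝ p1 q1 ∩ segment ℝ p2 q2).Nonempty := by
    rcases hseg with ⟨h₁, h₂⟩ | ⟨h₁, h₂⟩
    all_goals
      obtain ⟨hm₁, hm₁'⟩ := h₁ (midpoint_mem_openSegment p1 q1)
      obtain ⟨hm₂, hm₂'⟩ := h₂ (midpoint_mem_openSegment p2 q2)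
      simp only [mem_ofPred_eq, real_inner_midpoint_left] at hm₁ hm₁' hm₂ hm₂'
    · refine hcross 1 ?_ ?_ ?_ ?_ <;> linarith
    · refine hcross (-1) ?_ ?_ ?_ ?_ <;> linarith
  exact ⟨z, segment_subset_convexHull hp1 hq1 hz₁, segment_subset_convexHull hp2 hq2 hz₂⟩

theorem not_wellSeparated_of_same_alpha_vector_dim2
    (P1 P2 : Finset (EuclideanSpace ℝ (Fin 2)))
    (p1 p2 q1 q2 : EuclideanSpace ℝ (Fin 2))
    (hp1 : p1 ∈ P1) (hp2 : p2 ∈ P2) (hq1 : q1 ∈ P1) (hq2 : q2 ∈ P2)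
    (np nq : EuclideanSpace ℝ (Fin 2)) (hnp : ‖np‖ = 1) (hnq : ‖nq‖ = 1)
    (htp : ⟪p1, np⟫ = ⟪p2, np⟫) (htq : ⟪q1, nq⟫ = ⟪q2, nq⟫)
    (hdetp : 0 < Matrix.det !![p1 0, p2 0, np 0; p1 1, p2 1, np 1; 1, 1, 0])
    (hdetq : 0 < Matrix.det !![q1 0, q2 0, nq 0; q1 1, q2 1, nq 1; 1, 1, 0])
    (hdistinct : {y : EuclideanSpace ℝ (Fin 2) | ⟪y, np⟫ = ⟪p1, np⟫} ≠
      {y : EuclideanSpace ℝ (Fin 2) | ⟪y, nq⟫ = ⟪q1, nq⟫})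
    (halpha1 : {x ∈ (P1 : Set (EuclideanSpace ℝ (Fin 2))) | ⟪p1, np⟫ ≤ ⟪x, np⟫}.ncard =
      {x ∈ (P1 : Set (EuclideanSpace ℝ (Fin 2))) | ⟪q1, nq⟫ ≤ ⟪x, nq⟫}.ncard)
    (halpha2 : {x ∈ (P2 : Set (EuclideanSpace ℝ (Fin 2))) | ⟪p1, np⟫ ≤ ⟪x, np⟫}.ncard =
      {x ∈ (P2 : Set (EuclideanSpace ℝ (Fin 2))) | ⟪q1, nq⟫ ≤ ⟪x, nq⟫}.ncard)
    (x : EuclideanSpace ℝ (Fin 2))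
    (hx : {y : EuclideanSpace ℝ (Fin 2) | ⟪y, np⟫ = ⟪p1, np⟫} ∩
      {y : EuclideanSpace ℝ (Fin 2) | ⟪y, nq⟫ = ⟪q1, nq⟫} = {x})
    (hx1 : x ∉ convexHull ℝ (P1 : Set (EuclideanSpace ℝ (Fin 2))))
    (hx2 : x ∉ convexHull ℝ (P2 : Set (EuclideanSpace ℝ (Fin 2))))
    (hseg :
      (openSegment ℝ p1 q1 ⊆ {y | ⟪p1, np⟫ < ⟪y, np⟫} ∩ {y | ⟪q1, nq⟫ < ⟪y, nq⟫} ∧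
        openSegment ℝ p2 q2 ⊆ {y | ⟪p1, np⟫ < ⟪y, np⟫} ∩ {y | ⟪q1, nq⟫ < ⟪y, nq⟫}) ∨
      (openSegment ℝ p1 q1 ⊆ {y | ⟪y, np⟫ < ⟪p1, np⟫} ∩ {y | ⟪y, nq⟫ < ⟪q1, nq⟫} ∧
        openSegment ℝ p2 q2 ⊆ {y | ⟪y, np⟫ < ⟪p1, np⟫} ∩ {y | ⟪y, nq⟫ < ⟪q1, nq⟫})) :
    (convexHull ℝ (P1 : Set (EuclideanSpace ℝ (Fin 2))) ∩
      convexHull ℝ (P2 : Set (EuclideanSpace ℝ (Fin 2)))).Nonempty :=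
  not_wellSeparated_of_same_alpha_vector_dim2_general P1 P2 p1 p2 q1 q2 hp1 hp2 hq1 hq2 np nq hnp
    hnq htp htq hdetp hdetq x hx hseg
end

section
/- Let P be a finite point set in R^d and let H be a hyperplane obtained by rotating a hyperplane H_1 about a (d−2)-flat R (spanned by points of P), where the rotation does not pass through any point of P. Let P_j ⊆ P be a subset (the missing color) disjoint from H_1 and from every intermediate hyperplane of the rotation, and let x, y ∈ P_j be points with x ∈ H_1^+ and y ∈ H_1^−, such that the segment xy does not meet R. Then x ∈ H^+ and y ∈ H^−, where the orientation of each intermediate hyperplane is defined via R and the intersection of that hyperplane with segment xy. -/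
open Set
open scoped RealInnerProductSpace

/-! The side of `p` relative to the rotating hyperplane is the sign of `⟪p, n θ⟫ - t θ`, a
continuous function of `θ`. As no point of `Pj` ever lies on the hyperplane, it never vanishes, so
by the intermediate value theorem its sign at `θ = 1` is its sign at `θ = 0`. -/

theorem IsPreconnected.lt_of_lt_of_forall_ne {X α : Type*} [TopologicalSpace X] [LinearOrder α]
    [TopologicalSpace α] [OrderClosedTopology α] {s : Set X} (hs : IsPreconnected s)
    {f g : X → α} (hf : ContinuousOn f s) (hg : ContinuousOn g s) (hne : ∀ x ∈ s, f x ≠ g x)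
    {a b : X} (ha : a ∈ s) (hb : b ∈ s) (hab : f a < g a) : f b < g b := by
  by_contra! hba
  obtain ⟨x, hx, hfg⟩ := hs.intermediate_value₂ ha hb hf hg hab.le hba
  exact hne x hx hfg

theorem orientation_consistent_along_rotation_general
    {d : ℕ} (Pj : Finset (EuclideanSpace ℝ (Fin d)))
    (n : ℝ → EuclideanSpace ℝ (Fin d)) (t : ℝ → ℝ)
    (hn : ContinuousOn n (Set.Icc 0 1)) (ht : ContinuousOn t (Set.Icc 0 1))
    (hmiss : ∀ θ ∈ Set.Icc (0 : ℝ) 1, ∀ p ∈ Pj, ⟪p, n θ⟫ ≠ t θ)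
    (x y : EuclideanSpace ℝ (Fin d)) (hx : x ∈ Pj) (hy : y ∈ Pj)
    (hx0 : t 0 < ⟪x, n 0⟫) (hy0 : ⟪y, n 0⟫ < t 0) :
    t 1 < ⟪x, n 1⟫ ∧ ⟪y, n 1⟫ < t 1 := by
  have hside : ∀ p, ContinuousOn (fun θ => ⟪p, n θ⟫) (Icc 0 1) :=
    fun p => continuousOn_const.inner hn
  have h0 : (0 : ℝ) ∈ Icc 0 1 := left_mem_Icc.mpr zero_le_one
  have h1 : (1 : ℝ) ∈ Icc 0 1 := right_mem_Icc.mpr zero_le_one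
  exact ⟨isPreconnected_Icc.lt_of_lt_of_forall_ne ht (hside x)
      (fun θ hθ => (hmiss θ hθ x hx).symm) h0 h1 hx0,
    isPreconnected_Icc.lt_of_lt_of_forall_ne (hside y) ht
      (fun θ hθ => hmiss θ hθ y hy) h0 h1 hy0⟩

theorem orientation_consistent_along_rotation
    {d : ℕ} (P Pj : Finset (EuclideanSpace ℝ (Fin d))) (hPj : Pj ⊆ P)
    (R : AffineSubspace ℝ (EuclideanSpace ℝ (Fin d)))
    (hRdim : Module.finrank ℝ R.direction = d - 2)
    (n : ℝ → EuclideanSpace ℝ (Fin d)) (t : ℝ → ℝ)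
    (hn : ContinuousOn n (Set.Icc 0 1)) (ht : ContinuousOn t (Set.Icc 0 1))
    (hn0 : ∀ θ ∈ Set.Icc (0 : ℝ) 1, n θ ≠ 0)
    (hR : ∀ θ ∈ Set.Icc (0 : ℝ) 1, ∀ w ∈ (R : Set (EuclideanSpace ℝ (Fin d))),
      ⟪w, n θ⟫ = t θ)
    (hmiss : ∀ θ ∈ Set.Icc (0 : ℝ) 1, ∀ p ∈ Pj, ⟪p, n θ⟫ ≠ t θ)
    (x y : EuclideanSpace ℝ (Fin d)) (hx : x ∈ Pj) (hy : y ∈ Pj)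
    (hxy : ∀ w ∈ segment ℝ x y, w ∉ (R : Set (EuclideanSpace ℝ (Fin d))))
    (hx0 : t 0 < ⟪x, n 0⟫) (hy0 : ⟪y, n 0⟫ < t 0) :
    t 1 < ⟪x, n 1⟫ ∧ ⟪y, n 1⟫ < t 1 :=
  orientation_consistent_along_rotation_general Pj n t hn ht hmiss x y hx hy hx0 hy0
end
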